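/- Every connected loop diagram has exactly one independent cycle (first Betti number 1): it consists of a single cycle whose interaction vertices are all of one type T among {B,A,A}, {A,cbar,c}, {A,ψ,χbar}, {A,φbar,φ} joined by propagators of the corresponding single type, each cycle vertex carrying exactly one remaining half-edge labeled A, and these A-legs are completed by acyclic trees of {B,A,A} vertices joined by {A,B} propagators, with all remaining half-edges matched to external vertices labeled B or b. -/

import Mathlib

/-!  Feynman-diagram combinatorics of 4D topological Yang–Mills theory
in the (anti-)self-dual Landau gauges. -/

/-- The ten field labels. -/
inductive Fld : Type
  | A | psi | chibar | c | cbar | phi | phibar | etabar | B | b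
  deriving DecidableEq

/-- The seven allowed interaction-vertex types (multisets of labels). -/
def vertexTypes : List (Multiset Fld) :=
  [ {Fld.B, Fld.A, Fld.A}
  , {Fld.chibar, Fld.A, Fld.c}
  , {Fld.A, Fld.psi, Fld.chibar}
  , {Fld.A, Fld.cbar, Fld.c}
  , {Fld.A, Fld.phibar, Fld.phi}
  , {Fld.phibar, Fld.c, Fld.psi}
  , {Fld.chibar, Fld.c, Fld.A, Fld.A} ]

/-- The six allowed propagator types (unordered pairs of labels). -/
def propTypes : List (Multiset Fld) :=
  [ {Fld.c, Fld.cbar}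
  , {Fld.chibar, Fld.psi}
  , {Fld.etabar, Fld.psi}
  , {Fld.phi, Fld.phibar}
  , {Fld.A, Fld.B}
  , {Fld.A, Fld.b} ]

/-- A Feynman diagram: a finite set `H` of half-edges labelled by fields,
partitioned into vertices (the fibers of `vtx`), each vertex being an
interaction vertex of one of the seven allowed types or an external vertex
(a single half-edge), together with a perfect matching `mu` whose matched
pairs realize one of the six allowed propagator types. -/
structure Diagram where
  H : Type
  V : Type
  [fintypeH : Fintype H]
  [decEqH : DecidableEq H]
  [fintypeV : Fintype V]
  [decEqV : DecidableEq V]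
  vtx : H → V
  vtx_surj : Function.Surjective vtx
  lab : H → Fld
  mu : H → H
  mu_invol : Function.Involutive mu
  mu_ne : ∀ h, mu h ≠ h
  prop_ok : ∀ h, ({lab h, lab (mu h)} : Multiset Fld) ∈ propTypes
  vtx_ok : ∀ v : V,
      ((Finset.univ.filter (fun h => vtx h = v)).val.map lab) ∈ vertexTypes
      ∨ ∃ h, Finset.univ.filter (fun h' => vtx h' = v) = {h}

attribute [instance] Diagram.fintypeH Diagram.decEqH Diagram.fintypeV Diagram.decEqV

namespace Diagram

variable (D : Diagram)

/-- The set of half-edges belonging to a vertex. -/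
def fiber (v : D.V) : Finset D.H := Finset.univ.filter (fun h => D.vtx h = v)

/-- The multiset of field labels carried by a vertex. -/
def labels (v : D.V) : Multiset Fld := (D.fiber v).val.map D.lab

/-- An external vertex: a single half-edge (an external leg). -/
def IsExternal (v : D.V) : Prop := ∃ h, D.fiber v = {h}

/-- An interaction vertex: its labels form one of the seven allowed types. -/
def IsInteraction (v : D.V) : Prop := D.labels v ∈ vertexTypes

/-- Adjacency of the multigraph of the diagram. -/
def Adj (v w : D.V) : Prop := ∃ h, D.vtx h = v ∧ D.vtx (D.mu h) = w

/-- Connectedness of the multigraph of the diagram. -/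
def Connected : Prop := ∀ v w : D.V, Relation.ReflTransGen D.Adj v w

/-- A cycle of the multigraph: a closed walk `e 0, e 1, …, e (n-1)` of
half-edges (each matched pair `{e i, mu (e i)}` being the traversed edge),
of positive length, with pairwise distinct edges and pairwise distinct
vertices. -/
structure Cycle where
  n : ℕ
  npos : 0 < n
  e : ZMod n → D.H
  step : ∀ i, D.vtx (D.mu (e i)) = D.vtx (e (i + 1))
  edges_distinct : ∀ i j, i ≠ j → e i ≠ e j ∧ e i ≠ D.mu (e j)
  vtx_inj : Function.Injective fun i => D.vtx (e i)

/-- A loop diagram: the multigraph contains a cycle. -/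
def IsLoopDiagram : Prop := Nonempty D.Cycle

end Diagram

/-!
Weigh the fields by `A ↦ 0, c ↦ 1, ψ ↦ 2, φ, φbar ↦ 4, χbar, ηbar ↦ 6, cbar ↦ 7, B, b ↦ 8`.
Every propagator then has total weight `8` and every vertex weight at most `8`, so
`4 #H ≤ 8 #V`, i.e. there are at most as many edges as vertices. A connected graph with a cycle
has at least as many edges as vertices, hence equality: the first Betti number is `1`, and every
vertex has weight exactly `8`, which leaves the types `{B,A,A}`, `{A,cbar,c}`, `{A,ψ,χbar}`,
`{A,φbar,φ}` and external `B`, `b` legs.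

Following a ghost line `c → cbar`, `ψ → χbar` or `φ → φbar` through these vertices closes it into
a cycle. Removing an edge of that cycle keeps the diagram connected, so if the edge were not on
`C` we could remove an edge of `C` as well and still have a connected graph, with fewer edges
than vertices. Hence all ghost fields sit on `C`, which makes `C` a single ghost loop with `A`
legs, or else a loop of `{B,A,A}` vertices; in the latter case, an `A` leaving a cycle vertex
along `C` forces the next one to leave by an `A` too, so that each `B` lies on `C`.
-/

open Finset Function

instance : Fintype Fld :=
  ⟨{.A, .psi, .chibar, .c, .cbar, .phi, .phibar, .etabar, .B, .b}, fun x => by cases x <;> decide⟩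

namespace Fld

def weight : Fld → ℕ
  | A => 0 | c => 1 | psi => 2 | phi => 4 | phibar => 4
  | chibar => 6 | etabar => 6 | cbar => 7 | B => 8 | b => 8

def ghostNumber : Fld → ℤ
  | c | psi => 1 | phi => 2 | cbar | chibar | etabar => -1 | phibar => -2
  | A | B | b => 0

end Fld

/-- The possible cycle vertex types `T`, each with the propagator type `P` joining them. -/
def cycleTypes : List (Multiset Fld × Multiset Fld) :=
  [ ({Fld.B, Fld.A, Fld.A}, {Fld.A, Fld.B})
  , ({Fld.A, Fld.cbar, Fld.c}, {Fld.c, Fld.cbar})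
  , ({Fld.A, Fld.psi, Fld.chibar}, {Fld.chibar, Fld.psi})
  , ({Fld.A, Fld.phibar, Fld.phi}, {Fld.phi, Fld.phibar}) ]

def loopVertexTypes : List (Multiset Fld) := cycleTypes.map Prod.fst ++ [{Fld.B}, {Fld.b}]

def ghostPairs : List (Fld × Fld) := [(.c, .cbar), (.psi, .chibar), (.phi, .phibar)]

theorem Fld.weight_add_weight_of_mem_propTypes :
    ∀ x y : Fld, ({x, y} : Multiset Fld) ∈ propTypes → x.weight + y.weight = 8 := by
  decide

theorem Fld.weight_le : ∀ x : Fld, x.weight ≤ 8 := by decide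

theorem sum_weight_le_of_mem_vertexTypes : ∀ T ∈ vertexTypes, (T.map Fld.weight).sum ≤ 8 := by
  decide

theorem mem_loopVertexTypes_of_sum_weight_eq :
    ∀ T ∈ vertexTypes, (T.map Fld.weight).sum = 8 → T ∈ loopVertexTypes := by
  decide

theorem singleton_mem_loopVertexTypes_of_weight_eq :
    ∀ x : Fld, x.weight = 8 → {x} ∈ loopVertexTypes := by
  decide

theorem fst_ne_snd_of_mem_ghostPairs : ∀ p ∈ ghostPairs, p.1 ≠ p.2 := by decide

theorem eq_snd_of_mem_ghostPairs : ∀ p ∈ ghostPairs, ∀ z : Fld,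
    ({p.1, z} : Multiset Fld) ∈ propTypes → (∃ T ∈ loopVertexTypes, z ∈ T) → z = p.2 := by
  decide

theorem eq_fst_of_mem_ghostPairs : ∀ p ∈ ghostPairs, ∀ z : Fld,
    ({p.2, z} : Multiset Fld) ∈ propTypes → z = p.1 := by
  decide

theorem count_le_one_of_mem_ghostPairs : ∀ p ∈ ghostPairs, ∀ T ∈ loopVertexTypes,
    T.count p.1 ≤ 1 ∧ T.count p.2 ≤ 1 := by
  decide

theorem fst_mem_of_snd_mem_of_mem_ghostPairs : ∀ p ∈ ghostPairs, ∀ T ∈ loopVertexTypes,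
    p.2 ∈ T → p.1 ∈ T := by
  decide

theorem exists_mem_ghostPairs : ∀ z : Fld, z.ghostNumber ≠ 0 →
    (∃ T ∈ loopVertexTypes, z ∈ T) → ∃ p ∈ ghostPairs, z = p.1 ∨ z = p.2 := by
  decide

theorem mem_cycleTypes_of_two_le_card : ∀ T ∈ loopVertexTypes,
    2 ≤ Multiset.card T → T ∈ cycleTypes.map Prod.fst := by
  decide

theorem card_fst_of_mem_cycleTypes : ∀ p ∈ cycleTypes, Multiset.card p.1 = 3 := by decide

theorem snd_eq_of_mem_cycleTypes :
    ∀ p ∈ cycleTypes, ∀ q ∈ cycleTypes, p.1 = q.1 → p.2 = q.2 := by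
  decide

theorem count_A_le_one_of_mem_cycleTypes : ∀ p ∈ cycleTypes,
    p.1 ≠ {Fld.B, Fld.A, Fld.A} → p.1.count Fld.A ≤ 1 := by
  decide

theorem eq_A_of_ghostNumber_eq_zero : ∀ p ∈ cycleTypes, p.1 ≠ {Fld.B, Fld.A, Fld.A} →
    ∀ z ∈ p.1, z.ghostNumber = 0 → z = Fld.A := by
  decide

theorem ghost_propagator_of_mem_cycleTypes : ∀ p ∈ cycleTypes, ∀ x ∈ p.1,
    x.ghostNumber ≠ 0 → ∀ z : Fld, ({x, z} : Multiset Fld) ∈ propTypes →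
    ∀ T ∈ loopVertexTypes, z ∈ T → T = p.1 ∧ (p.1, ({x, z} : Multiset Fld)) ∈ cycleTypes := by
  decide

theorem propagator_of_mem_BAA : ∀ x ∈ ({Fld.B, Fld.A, Fld.A} : Multiset Fld),
    ∀ z ∈ ({Fld.B, Fld.A, Fld.A} : Multiset Fld),
    ({x, z} : Multiset Fld) ∈ propTypes → ({x, z} : Multiset Fld) = {Fld.A, Fld.B} := by
  decide

theorem eq_B_of_mem_BAA : ∀ z ∈ ({Fld.B, Fld.A, Fld.A} : Multiset Fld),
    ({Fld.A, z} : Multiset Fld) ∈ propTypes → z = Fld.B := by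
  decide

theorem eq_A_of_mem_BAA :
    ∀ z ∈ ({Fld.B, Fld.A, Fld.A} : Multiset Fld), z ≠ Fld.B → z = Fld.A := by
  decide

theorem loopVertexTypes_cases : ∀ T ∈ loopVertexTypes, T = {Fld.B, Fld.A, Fld.A} ∨
    T = {Fld.B} ∨ T = {Fld.b} ∨ ∃ z ∈ T, z.ghostNumber ≠ 0 := by
  decide

theorem propagator_of_ghostNumber_eq_zero : ∀ x z : Fld, ({x, z} : Multiset Fld) ∈ propTypes →
    x.ghostNumber = 0 → z.ghostNumber = 0 →
    ({x, z} : Multiset Fld) = {Fld.A, Fld.B} ∨ ({x, z} : Multiset Fld) = {Fld.A, Fld.b} := by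
  decide

theorem ZMod.forall_of_add_one {n : ℕ} [NeZero n] {P : ZMod n → Prop} {a : ZMod n} (ha : P a)
    (hP : ∀ i, P i → P (i + 1)) (i : ZMod n) : P i := by
  have key : ∀ m : ℕ, P (a + m) := by
    intro m
    induction m with
    | zero => simpa using ha
    | succ m ih => simpa [add_assoc] using hP _ ih
  simpa [ZMod.natCast_zmod_val] using key (i - a).val

namespace Function

variable {α : Type*} {f : α → α} {x : α} [NeZero (minimalPeriod f x)]

theorem iterate_zmod_val_add_one (i : ZMod (minimalPeriod f x)) :
    f^[(i + 1).val] x = f (f^[i.val] x) := by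
  rw [← iterate_succ_apply' f i.val x, ← iterate_mod_minimalPeriod_eq (n := i.val.succ),
    ← ZMod.val_natCast, Nat.cast_succ, ZMod.natCast_zmod_val]

theorem iterate_zmod_val_injective : Injective fun i : ZMod (minimalPeriod f x) => f^[i.val] x :=
  fun i j hij => ZMod.val_injective _
    ((iterate_eq_iterate_iff_of_lt_minimalPeriod (ZMod.val_lt i) (ZMod.val_lt j)).1 hij)

end Function

namespace Diagram

variable {D : Diagram}

theorem mem_fiber {h : D.H} {v : D.V} : h ∈ D.fiber v ↔ D.vtx h = v := by simp [fiber]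

theorem lab_mem_labels (h : D.H) : D.lab h ∈ D.labels (D.vtx h) :=
  Multiset.mem_map_of_mem _ (mem_fiber.2 rfl)

theorem card_labels (v : D.V) : Multiset.card (D.labels v) = #(D.fiber v) :=
  Multiset.card_map _ _

theorem exists_lab_eq_of_mem_labels {v : D.V} {x : Fld} (hx : x ∈ D.labels v) :
    ∃ h, D.vtx h = v ∧ D.lab h = x := by
  obtain ⟨h, hh, rfl⟩ := Multiset.mem_map.1 hx
  exact ⟨h, mem_fiber.1 hh, rfl⟩

theorem eq_of_count_labels_le_one {v : D.V} {x : Fld} (hx : (D.labels v).count x ≤ 1)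
    {h h' : D.H} (hv : D.vtx h = v) (hv' : D.vtx h' = v) (hl : D.lab h = x)
    (hl' : D.lab h' = x) : h = h' := by
  have hcount : (D.labels v).count x = #{h ∈ D.fiber v | D.lab h = x} := by
    simp only [labels, Multiset.count_map, card_def, filter_val]
    exact congrArg Multiset.card (Multiset.filter_congr fun _ _ => eq_comm)
  exact card_le_one.1 (hcount ▸ hx) h (by simp [mem_fiber, hv, hl]) h'
    (by simp [mem_fiber, hv', hl'])

theorem labels_eq_singleton_iff {v : D.V} {x : Fld} :
    D.labels v = {x} ↔ ∃ h, D.fiber v = {h} ∧ D.lab h = x := by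
  constructor
  · intro hv
    obtain ⟨h, hh⟩ := card_eq_one.1 (by rw [← card_labels, hv, Multiset.card_singleton])
    refine ⟨h, hh, ?_⟩
    rw [labels, hh] at hv
    exact Multiset.singleton_inj.1 hv
  · rintro ⟨h, hh, rfl⟩
    rw [labels, hh]
    rfl

theorem isInteraction_or_isExternal (v : D.V) : D.IsInteraction v ∨ D.IsExternal v :=
  D.vtx_ok v

variable (D) in
def vertexWeight (v : D.V) : ℕ := ((D.labels v).map Fld.weight).sum

theorem vertexWeight_le (v : D.V) : D.vertexWeight v ≤ 8 := by
  rcases D.isInteraction_or_isExternal v with hv | ⟨h, hv⟩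
  · exact sum_weight_le_of_mem_vertexTypes _ hv
  · simpa [vertexWeight, labels_eq_singleton_iff.2 ⟨h, hv, rfl⟩] using Fld.weight_le _

theorem sum_vertexWeight : ∑ v, D.vertexWeight v = 4 * Fintype.card D.H := by
  have hfib : ∑ v, D.vertexWeight v = ∑ h, (D.lab h).weight := by
    rw [← sum_fiberwise univ D.vtx]
    refine sum_congr rfl fun v _ => ?_
    simp only [vertexWeight, labels, Multiset.map_map]
    rfl
  have hmu : ∑ h, (D.lab (D.mu h)).weight = ∑ h, (D.lab h).weight :=
    Equiv.sum_comp (D.mu_invol.toPerm _) fun h => (D.lab h).weight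
  have h8 : ∑ h, ((D.lab h).weight + (D.lab (D.mu h)).weight) = ∑ _h : D.H, 8 :=
    sum_congr rfl fun h _ => Fld.weight_add_weight_of_mem_propTypes _ _ (D.prop_ok h)
  rw [sum_add_distrib, hmu, sum_const, card_univ, smul_eq_mul] at h8
  omega

theorem card_H_le : Fintype.card D.H ≤ 2 * Fintype.card D.V := by
  have := sum_le_sum fun v (_ : v ∈ univ) => D.vertexWeight_le v
  rw [sum_vertexWeight, sum_const, card_univ, smul_eq_mul] at this
  omega

theorem labels_mem_loopVertexTypes (hcard : 2 * Fintype.card D.V ≤ Fintype.card D.H)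
    (v : D.V) : D.labels v ∈ loopVertexTypes := by
  have hsum : ∑ v, D.vertexWeight v = ∑ _v : D.V, 8 := by
    refine le_antisymm (sum_le_sum fun v _ => D.vertexWeight_le v) ?_
    rw [sum_vertexWeight, sum_const, card_univ, smul_eq_mul]
    omega
  have hv : D.vertexWeight v = 8 :=
    (sum_eq_sum_iff_of_le fun v _ => D.vertexWeight_le v).1 hsum v (mem_univ v)
  rcases D.isInteraction_or_isExternal v with hint | ⟨h, hext⟩
  · exact mem_loopVertexTypes_of_sum_weight_eq _ hint hv
  · have hl := labels_eq_singleton_iff.2 ⟨h, hext, rfl⟩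
    rw [hl]
    exact singleton_mem_loopVertexTypes_of_weight_eq _ (by simpa [vertexWeight, hl] using hv)

namespace Cycle

variable (C : D.Cycle)

instance : NeZero C.n := ⟨C.npos.ne'⟩

def HasEdge (h : D.H) : Prop := ∃ i, C.e i = h ∨ C.e i = D.mu h

variable {C}

theorem hasEdge_mu {h : D.H} : C.HasEdge (D.mu h) ↔ C.HasEdge h := by
  simp [HasEdge, D.mu_invol h, or_comm]

theorem vtx_mu_e_sub_one (i : ZMod C.n) : D.vtx (D.mu (C.e (i - 1))) = D.vtx (C.e i) := by
  rw [C.step, sub_add_cancel]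

theorem mu_e_sub_one_ne (i : ZMod C.n) : D.mu (C.e (i - 1)) ≠ C.e i := by
  by_cases hi : i - 1 = i
  · rw [hi]
    exact D.mu_ne _
  · exact (C.edges_distinct i (i - 1) (Ne.symm hi)).2.symm

theorem exists_vtx_eq_of_hasEdge {h : D.H} (hh : C.HasEdge h) :
    ∃ i, D.vtx (C.e i) = D.vtx h := by
  obtain ⟨i, rfl | hi⟩ := hh
  · exact ⟨i, rfl⟩
  · exact ⟨i + 1, by rw [← C.step, hi, D.mu_invol]⟩

theorem eq_or_eq_of_hasEdge {h : D.H} {k : ZMod C.n} (hv : D.vtx h = D.vtx (C.e k))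
    (hh : C.HasEdge h) : h = C.e k ∨ h = D.mu (C.e (k - 1)) := by
  obtain ⟨i, hi | hi⟩ := hh
  · subst hi
    exact .inl (congrArg C.e (C.vtx_inj hv))
  · have hmu : D.mu (C.e i) = h := by rw [hi, D.mu_invol]
    have hik : i + 1 = k := C.vtx_inj (show D.vtx (C.e (i + 1)) = D.vtx (C.e k) by
      rw [← C.step, hmu, hv])
    exact .inr (by rw [← hik, add_sub_cancel_right, hmu])

theorem two_le_card_labels (k : ZMod C.n) : 2 ≤ Multiset.card (D.labels (D.vtx (C.e k))) := by
  rw [card_labels]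
  exact one_lt_card.2 ⟨_, mem_fiber.2 rfl, _, mem_fiber.2 (C.vtx_mu_e_sub_one k),
    (C.mu_e_sub_one_ne k).symm⟩

theorem exists_third_leg (k : ZMod C.n) (h3 : Multiset.card (D.labels (D.vtx (C.e k))) = 3) :
    ∃ a, D.fiber (D.vtx (C.e k)) \ {C.e k, D.mu (C.e (k - 1))} = {a} ∧
      D.vtx a = D.vtx (C.e k) ∧ a ≠ C.e k ∧ a ≠ D.mu (C.e (k - 1)) := by
  have hsub : {C.e k, D.mu (C.e (k - 1))} ⊆ D.fiber (D.vtx (C.e k)) := by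
    simp [insert_subset_iff, mem_fiber, C.vtx_mu_e_sub_one]
  have hpair : #{C.e k, D.mu (C.e (k - 1))} = 2 := card_pair (C.mu_e_sub_one_ne k).symm
  obtain ⟨a, ha⟩ := card_eq_one.1 (show #(D.fiber (D.vtx (C.e k)) \ _) = 1 by
    rw [card_sdiff_of_subset hsub, hpair, ← card_labels, h3])
  have hmem : a ∈ D.fiber (D.vtx (C.e k)) \ {C.e k, D.mu (C.e (k - 1))} :=
    ha ▸ mem_singleton_self a
  simp only [mem_sdiff, mem_insert, mem_singleton, not_or, mem_fiber] at hmem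
  exact ⟨a, ha, hmem.1, hmem.2.1, hmem.2.2⟩

end Cycle

section Graph

variable (D) in
def AdjIn (S : Finset D.H) (v w : D.V) : Prop := ∃ h ∈ S, D.vtx h = v ∧ D.vtx (D.mu h) = w

variable (D) in
def ConnectedIn (S : Finset D.H) : Prop := ∀ v w, Relation.ReflTransGen (D.AdjIn S) v w

variable (D) in
def edge (h : D.H) : Finset D.H := {h, D.mu h}

variable {S : Finset D.H}

theorem connectedIn_univ (hconn : D.Connected) : D.ConnectedIn univ :=
  fun v w => Relation.ReflTransGen.mono (fun _ _ ⟨h, hv, hw⟩ => ⟨h, mem_univ h, hv, hw⟩) _ _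
    (hconn v w)

theorem adjIn_comm (hS : ∀ h ∈ S, D.mu h ∈ S) {v w : D.V} (hvw : D.AdjIn S v w) :
    D.AdjIn S w v := by
  obtain ⟨h, hh, rfl, rfl⟩ := hvw
  exact ⟨D.mu h, hS h hh, rfl, by rw [D.mu_invol]⟩

theorem mu_mem_sdiff_edge (hS : ∀ h ∈ S, D.mu h ∈ S) (h : D.H) :
    ∀ h' ∈ S \ D.edge h, D.mu h' ∈ S \ D.edge h := by
  intro h' hh'
  simp only [edge, mem_sdiff, mem_insert, mem_singleton, not_or] at hh' ⊢
  refine ⟨hS h' hh'.1, fun he => hh'.2.2 ?_, fun he => hh'.2.1 (D.mu_invol.injective he)⟩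
  rw [← he, D.mu_invol]

theorem card_sdiff_edge (hS : ∀ h ∈ S, D.mu h ∈ S) {h : D.H} (hh : h ∈ S) :
    #(S \ D.edge h) + 2 = #S := by
  have hsub : D.edge h ⊆ S := by simp [edge, insert_subset_iff, hh, hS h hh]
  have hcard : #(D.edge h) = 2 := card_pair (D.mu_ne h).symm
  rw [card_sdiff_of_subset hsub, hcard]
  have := card_le_card hsub
  omega

theorem ConnectedIn.two_mul_card_le (hS : ∀ h ∈ S, D.mu h ∈ S) (hconn : D.ConnectedIn S) :
    2 * Fintype.card D.V ≤ #S + 2 := by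
  rcases isEmpty_or_nonempty D.V with hV | hV
  · simp
  let G := SimpleGraph.fromRel (D.AdjIn S)
  have hG : G.Connected := by
    refine ⟨fun v w => ?_⟩
    rw [SimpleGraph.reachable_iff_reflTransGen]
    refine Relation.ReflTransGen.lift' id (fun a b hab => ?_) _ _ (hconn v w)
    by_cases hab' : a = b
    · exact hab' ▸ .refl
    · exact .single ((SimpleGraph.fromRel_adj _ _ _).2 ⟨hab', .inl hab⟩)
  let ends : D.H → Sym2 D.V := fun h => s(D.vtx h, D.vtx (D.mu h))
  have hsub : G.edgeSet ⊆ ↑(S.image ends) := by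
    intro e he
    induction e using Sym2.ind with
    | _ v w =>
      obtain ⟨-, ⟨h, hh, rfl, rfl⟩ | ⟨h, hh, rfl, rfl⟩⟩ := (SimpleGraph.mem_edgeSet G).1 he
      · exact mem_image_of_mem _ hh
      · exact mem_image.2 ⟨h, hh, Sym2.eq_swap⟩
  have hhalf : 2 * #(S.image ends) ≤ #S := by
    refine mul_card_image_le_card S 2 fun e he => ?_
    obtain ⟨h, hh, rfl⟩ := mem_image.1 he
    refine one_lt_card.2 ⟨h, by simp [hh], D.mu h, ?_, (D.mu_ne h).symm⟩
    simp [hS h hh, ends, D.mu_invol h]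
  have hE : Nat.card G.edgeSet ≤ #(S.image ends) := by
    simpa using Nat.card_mono (S.image ends).finite_toSet hsub
  have := hG.card_vert_le_card_edgeSet_add_one
  rw [Nat.card_eq_fintype_card] at this
  omega

theorem ConnectedIn.sdiff_edge (hS : ∀ h ∈ S, D.mu h ∈ S) (hconn : D.ConnectedIn S)
    (C : D.Cycle) (hC : ∀ i, C.e i ∈ S) : D.ConnectedIn (S \ D.edge (C.e 0)) := by
  set R := D.AdjIn (S \ D.edge (C.e 0))
  have hmem : ∀ i, i ≠ 0 → C.e i ∈ S \ D.edge (C.e 0) := fun i hi => by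
    simp [edge, hC i, (C.edges_distinct i 0 hi).1, (C.edges_distinct i 0 hi).2]
  -- the rest of the cycle joins the two ends of the removed edge
  have hpath : ∀ m < C.n, Relation.ReflTransGen R (D.vtx (C.e 1)) (D.vtx (C.e (1 + m))) := by
    intro m
    induction m with
    | zero => intro _; simpa using Relation.ReflTransGen.refl
    | succ m ih =>
      intro hm
      have hne : (1 + m : ZMod C.n) ≠ 0 := by
        rw [← Nat.cast_one, ← Nat.cast_add, Ne, ZMod.natCast_eq_zero_iff]
        exact Nat.not_dvd_of_pos_of_lt (by omega) (by omega)
      refine (ih (by omega)).tail ⟨C.e (1 + m), hmem _ hne, rfl, ?_⟩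
      rw [C.step, Nat.cast_succ, add_assoc]
  have hends : Relation.ReflTransGen R (D.vtx (C.e 1)) (D.vtx (C.e 0)) := by
    have := hpath (C.n - 1) (by have := C.npos; omega)
    rwa [Nat.cast_pred C.npos, ZMod.natCast_self, add_sub_cancel] at this
  have hends' : Relation.ReflTransGen R (D.vtx (C.e 0)) (D.vtx (C.e 1)) :=
    Relation.ReflTransGen.mono (fun _ _ => adjIn_comm (mu_mem_sdiff_edge hS _)) _ _
      (Relation.ReflTransGen.swap _ _ hends)
  intro v w
  refine Relation.ReflTransGen.lift' id (fun a b ⟨h, hh, ha, hb⟩ => ?_) _ _ (hconn v w)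
  by_cases h0 : h ∈ D.edge (C.e 0)
  · simp only [edge, mem_insert, mem_singleton] at h0
    rcases h0 with rfl | rfl
    · rw [← ha, ← hb, C.step, zero_add]
      exact hends'
    · rw [← ha, ← hb, D.mu_invol, C.step, zero_add]
      exact hends
  · exact .single ⟨h, mem_sdiff.2 ⟨hh, h0⟩, ha, hb⟩

end Graph

theorem two_mul_card_V_le_card_H (hconn : D.Connected) (C : D.Cycle) :
    2 * Fintype.card D.V ≤ Fintype.card D.H := by
  have hS : ∀ h ∈ (univ : Finset D.H), D.mu h ∈ univ := fun h _ => mem_univ _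
  have := ((connectedIn_univ hconn).sdiff_edge hS C fun i => mem_univ _).two_mul_card_le
    (mu_mem_sdiff_edge hS _)
  have := card_sdiff_edge hS (mem_univ (C.e 0))
  rw [card_univ] at this
  omega

theorem Cycle.hasEdge_of_card_H_eq (hconn : D.Connected)
    (hcard : Fintype.card D.H = 2 * Fintype.card D.V) (C C' : D.Cycle) : C.HasEdge (C'.e 0) := by
  by_contra hC
  have hS : ∀ h ∈ (univ : Finset D.H), D.mu h ∈ univ := fun h _ => mem_univ _
  set S := univ \ D.edge (C'.e 0)
  have hCS : ∀ i, C.e i ∈ S := fun i => by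
    simpa [S, edge] using fun h => hC ⟨i, h⟩
  have hS' := mu_mem_sdiff_edge hS (C'.e 0)
  have := (((connectedIn_univ hconn).sdiff_edge hS C' fun i => mem_univ _).sdiff_edge
    hS' C hCS).two_mul_card_le (mu_mem_sdiff_edge hS' _)
  have := card_sdiff_edge hS' (hCS 0)
  have := card_sdiff_edge hS (mem_univ (C'.e 0))
  rw [card_univ] at this
  omega

theorem exists_cycle_through {x y : Fld} (hxy : x ≠ y)
    (hmu : ∀ h, D.lab h = x → D.lab (D.mu h) = y)
    (hx : ∀ v, (D.labels v).count x ≤ 1) (hy : ∀ v, (D.labels v).count y ≤ 1)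
    (hyx : ∀ v, y ∈ D.labels v → x ∈ D.labels v) {h₀ : D.H} (h₀x : D.lab h₀ = x) :
    ∃ C : D.Cycle, C.e 0 = h₀ := by
  -- cross the propagator of an `x`-leg to a `y`-leg, then move on to the `x`-leg of that vertex
  have hnext : ∀ h : {h // D.lab h = x}, ∃ h' : {h // D.lab h = x},
      D.vtx h'.1 = D.vtx (D.mu h.1) := fun h => by
    obtain ⟨h', hv, hl⟩ := exists_lab_eq_of_mem_labels
      (hyx _ (hmu _ h.2 ▸ lab_mem_labels (D.mu h.1)))
    exact ⟨⟨h', hl⟩, hv⟩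
  choose next hnext using hnext
  have hinj : Injective next := fun h₁ h₂ h12 => Subtype.ext <| D.mu_invol.injective <|
    eq_of_count_labels_le_one (hy _) rfl (by rw [← hnext, ← h12, hnext])
      (hmu _ h₁.2) (hmu _ h₂.2)
  set p : {h // D.lab h = x} := ⟨h₀, h₀x⟩
  have hpos := minimalPeriod_pos_of_mem_periodicPts (hinj.mem_periodicPts p)
  have : NeZero (minimalPeriod next p) := ⟨hpos.ne'⟩
  refine ⟨⟨minimalPeriod next p, hpos, fun i => (next^[i.val] p).1, fun i => ?_,
    fun i j hij => ⟨?_, ?_⟩, fun i j hij => ?_⟩, by simp [p]⟩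
  · simp only [iterate_zmod_val_add_one, hnext]
  · exact fun h => hij (iterate_zmod_val_injective (Subtype.ext h))
  · intro h
    apply hxy
    rw [← (next^[i.val] p).2, h, hmu _ (next^[j.val] p).2]
  · exact iterate_zmod_val_injective (Subtype.ext
      (eq_of_count_labels_le_one (hx _) hij rfl (next^[i.val] p).2 (next^[j.val] p).2))

theorem Cycle.hasEdge_of_lab_eq_fst (hconn : D.Connected)
    (hcard : Fintype.card D.H = 2 * Fintype.card D.V) (hL : ∀ v, D.labels v ∈ loopVertexTypes)
    (C : D.Cycle) {p : Fld × Fld} (hp : p ∈ ghostPairs) {h : D.H} (hh : D.lab h = p.1) :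
    C.HasEdge h := by
  have hcount := fun v => count_le_one_of_mem_ghostPairs p hp _ (hL v)
  obtain ⟨C', rfl⟩ := exists_cycle_through (fst_ne_snd_of_mem_ghostPairs p hp)
    (fun h' hh' => eq_snd_of_mem_ghostPairs p hp _ (hh' ▸ D.prop_ok h')
      ⟨_, hL _, lab_mem_labels _⟩)
    (fun v => (hcount v).1) (fun v => (hcount v).2)
    (fun v => fst_mem_of_snd_mem_of_mem_ghostPairs p hp _ (hL v)) hh
  exact C.hasEdge_of_card_H_eq hconn hcard C'

theorem Cycle.hasEdge_of_ghostNumber_ne_zero (hconn : D.Connected)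
    (hcard : Fintype.card D.H = 2 * Fintype.card D.V) (hL : ∀ v, D.labels v ∈ loopVertexTypes)
    (C : D.Cycle) {h : D.H} (hh : (D.lab h).ghostNumber ≠ 0) : C.HasEdge h := by
  obtain ⟨p, hp, h1 | h2⟩ := exists_mem_ghostPairs _ hh ⟨_, hL _, lab_mem_labels h⟩
  · exact C.hasEdge_of_lab_eq_fst hconn hcard hL hp h1
  · exact Cycle.hasEdge_mu.1 (C.hasEdge_of_lab_eq_fst hconn hcard hL hp
      (eq_fst_of_mem_ghostPairs p hp _ (h2 ▸ D.prop_ok h)))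

namespace Cycle

variable {C : D.Cycle}

theorem structure_of_labels_ne_BAA (hL : ∀ v, D.labels v ∈ loopVertexTypes)
    (hghost : ∀ h, (D.lab h).ghostNumber ≠ 0 → C.HasEdge h) {k : ZMod C.n}
    (hk : D.labels (D.vtx (C.e k)) ≠ {Fld.B, Fld.A, Fld.A}) :
    (D.labels (D.vtx (C.e k)), {D.lab (C.e k), D.lab (D.mu (C.e k))}) ∈ cycleTypes ∧
    D.labels (D.vtx (C.e (k + 1))) = D.labels (D.vtx (C.e k)) ∧
    ∃ a, D.fiber (D.vtx (C.e k)) \ {C.e k, D.mu (C.e (k - 1))} = {a} ∧ D.lab a = Fld.A := by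
  obtain ⟨⟨T, P⟩, hTP, hT⟩ := List.mem_map.1
    (mem_cycleTypes_of_two_le_card _ (hL _) (C.two_le_card_labels k))
  obtain rfl : T = D.labels (D.vtx (C.e k)) := hT
  obtain ⟨a, ha, hav, hak, hak'⟩ := C.exists_third_leg k (card_fst_of_mem_cycleTypes _ hTP)
  have hA := count_A_le_one_of_mem_cycleTypes _ hTP hk
  have hnonghost := eq_A_of_ghostNumber_eq_zero _ hTP hk
  -- the ghost legs lie on `C`, so they are the two cycle legs
  have haA : D.lab a = Fld.A := hnonghost _ (hav ▸ lab_mem_labels a) <| not_not.1 fun hg =>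
    (C.eq_or_eq_of_hasEdge hav (hghost a hg)).elim hak hak'
  have hek : (D.lab (C.e k)).ghostNumber ≠ 0 := fun h0 =>
    hak (eq_of_count_labels_le_one hA hav rfl haA (hnonghost _ (lab_mem_labels _) h0))
  obtain ⟨hT', hP⟩ := ghost_propagator_of_mem_cycleTypes _ hTP _ (lab_mem_labels _) hek _
    (D.prop_ok _) _ (hL _) (C.step k ▸ lab_mem_labels (D.mu (C.e k)))
  exact ⟨hP, hT', a, ha, haA⟩

theorem structure_of_forall_BAA (hall : ∀ i, D.labels (D.vtx (C.e i)) = {Fld.B, Fld.A, Fld.A})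
    (k : ZMod C.n) :
    ({D.lab (C.e k), D.lab (D.mu (C.e k))} : Multiset Fld) = {Fld.A, Fld.B} ∧
    ∃ a, D.fiber (D.vtx (C.e k)) \ {C.e k, D.mu (C.e (k - 1))} = {a} ∧ D.lab a = Fld.A := by
  have hmem : ∀ h i, D.vtx h = D.vtx (C.e i) →
      D.lab h ∈ ({Fld.B, Fld.A, Fld.A} : Multiset Fld) :=
    fun h i hv => hall i ▸ hv ▸ lab_mem_labels h
  have hB : ∀ {h h'} i, D.vtx h = D.vtx (C.e i) → D.vtx h' = D.vtx (C.e i) →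
      D.lab h = Fld.B → D.lab h' = Fld.B → h = h' :=
    fun i => eq_of_count_labels_le_one (by rw [hall i]; decide)
  have hmuB : ∀ i, D.lab (C.e i) = Fld.A → D.lab (D.mu (C.e i)) = Fld.B := fun i hi =>
    eq_B_of_mem_BAA _ (hmem _ (i + 1) (C.step i)) (hi ▸ D.prop_ok _)
  have hstep : ∀ i, D.lab (C.e i) = Fld.A → D.lab (C.e (i + 1)) = Fld.A := by
    intro i hi
    have hne : D.mu (C.e i) ≠ C.e (i + 1) := by
      simpa using C.mu_e_sub_one_ne (i + 1)
    exact eq_A_of_mem_BAA _ (hmem _ _ rfl) fun h =>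
      hne (hB (i + 1) (C.step i) rfl (hmuB i hi) h)
  refine ⟨propagator_of_mem_BAA _ (hmem _ k rfl) _ (hmem _ (k + 1) (C.step k)) (D.prop_ok _), ?_⟩
  obtain ⟨a, ha, hav, hak, hak'⟩ := C.exists_third_leg k (by rw [hall k]; rfl)
  refine ⟨a, ha, eq_A_of_mem_BAA _ (hmem _ k hav) fun haB => ?_⟩
  have hkA : D.lab (C.e k) = Fld.A :=
    eq_A_of_mem_BAA _ (hmem _ k rfl) fun h => hak (hB k hav rfl haB h)
  have hA := ZMod.forall_of_add_one hkA hstep (k - 1)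
  exact hak' (hB k hav (C.vtx_mu_e_sub_one k) haB (hmuB _ hA))

theorem exists_cycleTypes (hL : ∀ v, D.labels v ∈ loopVertexTypes)
    (hghost : ∀ h, (D.lab h).ghostNumber ≠ 0 → C.HasEdge h) :
    ∃ p ∈ cycleTypes, ∀ i, D.labels (D.vtx (C.e i)) = p.1 ∧
      ({D.lab (C.e i), D.lab (D.mu (C.e i))} : Multiset Fld) = p.2 ∧
      ∃ a, D.fiber (D.vtx (C.e i)) \ {C.e i, D.mu (C.e (i - 1))} = {a} ∧ D.lab a = Fld.A := by
  by_cases hg : ∃ k, D.labels (D.vtx (C.e k)) ≠ {Fld.B, Fld.A, Fld.A}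
  · obtain ⟨k, hk⟩ := hg
    have hT : ∀ i, D.labels (D.vtx (C.e i)) = D.labels (D.vtx (C.e k)) :=
      ZMod.forall_of_add_one rfl fun i hi =>
        (structure_of_labels_ne_BAA hL hghost (hi ▸ hk)).2.1.trans hi
    have hTP := (structure_of_labels_ne_BAA hL hghost hk).1
    refine ⟨_, hTP, fun i => ?_⟩
    obtain ⟨hTPi, -, hA⟩ := structure_of_labels_ne_BAA hL hghost (k := i) (hT i ▸ hk)
    exact ⟨hT i, snd_eq_of_mem_cycleTypes _ hTPi _ hTP (hT i), hA⟩
  · have hall := not_exists_not.1 hg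
    exact ⟨_, List.mem_cons_self .., fun i => ⟨hall i, structure_of_forall_BAA hall i⟩⟩

theorem vertex_off_cycle_cases (hL : ∀ v, D.labels v ∈ loopVertexTypes)
    (hghost : ∀ h, (D.lab h).ghostNumber ≠ 0 → C.HasEdge h) {v : D.V}
    (hv : ∀ i, D.vtx (C.e i) ≠ v) :
    D.labels v = {Fld.B, Fld.A, Fld.A} ∨
      ∃ h₀, D.fiber v = {h₀} ∧ (D.lab h₀ = Fld.B ∨ D.lab h₀ = Fld.b) := by
  rcases loopVertexTypes_cases _ (hL v) with hBAA | hB | hb | ⟨z, hz, hgz⟩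
  · exact .inl hBAA
  · obtain ⟨h₀, hf, hl⟩ := labels_eq_singleton_iff.1 hB
    exact .inr ⟨h₀, hf, .inl hl⟩
  · obtain ⟨h₀, hf, hl⟩ := labels_eq_singleton_iff.1 hb
    exact .inr ⟨h₀, hf, .inr hl⟩
  · obtain ⟨h, rfl, rfl⟩ := exists_lab_eq_of_mem_labels hz
    obtain ⟨i, hi⟩ := exists_vtx_eq_of_hasEdge (hghost h hgz)
    exact absurd hi (hv i)

theorem propagator_off_cycle_cases (hghost : ∀ h, (D.lab h).ghostNumber ≠ 0 → C.HasEdge h)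
    {h : D.H} (hh : ∀ i, C.e i ≠ h ∧ C.e i ≠ D.mu h) :
    ({D.lab h, D.lab (D.mu h)} : Multiset Fld) = {Fld.A, Fld.B} ∨
      ({D.lab h, D.lab (D.mu h)} : Multiset Fld) = {Fld.A, Fld.b} := by
  have hoff : ¬C.HasEdge h := fun ⟨i, hi⟩ => hi.elim (hh i).1 (hh i).2
  exact propagator_of_ghostNumber_eq_zero _ _ (D.prop_ok h)
    (not_not.1 fun hg => hoff (hghost h hg))
    (not_not.1 fun hg => hoff (hasEdge_mu.1 (hghost _ hg)))

end Cycle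

end Diagram

/-- Every connected loop diagram has exactly one independent
cycle (first Betti number `1`, i.e. `#edges = #vertices`, i.e.
`#half-edges = 2 * #vertices`): it consists of a single cycle whose interaction
vertices are all of one type `T` among `{B,A,A}`, `{A,cbar,c}`, `{A,ψ,χbar}`,
`{A,φbar,φ}` joined by propagators of the corresponding single type, each cycle
vertex carrying exactly one remaining half-edge, which is labeled `A`; these
`A`-legs are completed by (necessarily acyclic, by Betti number `1`) trees of
`{B,A,A}` vertices joined by `{A,B}` propagators — so that every vertex off the
cycle is a `{B,A,A}` interaction vertex or an external vertex labeled `B` or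
`b`, and every edge off the cycle is of type `{A,B}` or `{A,b}` — with all
remaining half-edges matched to external vertices labeled `B` or `b`. -/
theorem loop_diagram_structure (D : Diagram) (hconn : D.Connected)
    (C : D.Cycle) :
    -- first Betti number 1
    Fintype.card D.H = 2 * Fintype.card D.V ∧
    -- the cycle consists of vertices of a single type T joined by propagators
    -- of the corresponding type P, each cycle vertex carrying exactly one
    -- remaining half-edge, labeled A
    (∃ T P : Multiset Fld,
      ((T = {Fld.B, Fld.A, Fld.A} ∧ P = {Fld.A, Fld.B}) ∨
       (T = {Fld.A, Fld.cbar, Fld.c} ∧ P = {Fld.c, Fld.cbar}) ∨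
       (T = {Fld.A, Fld.psi, Fld.chibar} ∧ P = {Fld.chibar, Fld.psi}) ∨
       (T = {Fld.A, Fld.phibar, Fld.phi} ∧ P = {Fld.phi, Fld.phibar})) ∧
      ∀ i, D.labels (D.vtx (C.e i)) = T ∧
        ({D.lab (C.e i), D.lab (D.mu (C.e i))} : Multiset Fld) = P ∧
        ∃ a : D.H, D.fiber (D.vtx (C.e i)) \ {C.e i, D.mu (C.e (i - 1))} = {a}
          ∧ D.lab a = Fld.A) ∧
    -- every vertex off the cycle is a {B,A,A} interaction vertex or an
    -- external vertex labeled B or b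
    (∀ v : D.V, (∀ i, D.vtx (C.e i) ≠ v) →
      D.labels v = {Fld.B, Fld.A, Fld.A} ∨
      ∃ h₀, D.fiber v = {h₀} ∧ (D.lab h₀ = Fld.B ∨ D.lab h₀ = Fld.b)) ∧
    -- every edge off the cycle is an {A,B} propagator (joining {B,A,A} tree
    -- vertices) or an {A,b} propagator (hence, by the above, with its b-end
    -- at an external vertex)
    (∀ h : D.H, (∀ i, C.e i ≠ h ∧ C.e i ≠ D.mu h) →
      ({D.lab h, D.lab (D.mu h)} : Multiset Fld) = {Fld.A, Fld.B} ∨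
      ({D.lab h, D.lab (D.mu h)} : Multiset Fld) = {Fld.A, Fld.b}) := by
  have hcard : Fintype.card D.H = 2 * Fintype.card D.V :=
    le_antisymm D.card_H_le (D.two_mul_card_V_le_card_H hconn C)
  have hL := D.labels_mem_loopVertexTypes hcard.ge
  have hghost : ∀ h, (D.lab h).ghostNumber ≠ 0 → C.HasEdge h :=
    fun _ => C.hasEdge_of_ghostNumber_ne_zero hconn hcard hL
  obtain ⟨⟨T, P⟩, hTP, hcyc⟩ := C.exists_cycleTypes hL hghost
  exact ⟨hcard, ⟨T, P, by simpa [cycleTypes] using hTP, hcyc⟩,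
    fun _ => C.vertex_off_cycle_cases hL hghost, fun _ => C.propagator_off_cycle_cases hghost⟩
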